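/- Let 0 → A →f B →g C → 0 be a short exact sequence of complexes which is degreewise split, with R-linear sections σ : C^n → B^n satisfying g∘σ = id. Let s(−g) be the simple complex of −g, i.e., s(−g)^n = B^n ⊕ C^{n-1} with d(b,c) = (d b, −g(b) − d c), and let ι : A → s(−g) be the morphism ι(a) = (f(a), 0). Define π′ : s(−g)^n → A^n by π′(b,c) = f^{-1}(b − σ(g(b)) − σ(d c) + d(σ(c))) (the argument lies in the image of f, and f is injective, so this is well defined). Then π′ is a morphism of complexes, π′∘ι = Id_A, and ι∘π′ is chain homotopic to the identity of s(−g). -/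

import Mathlib

noncomputable section

universe u v

/-- A cochain complex of `R`-modules indexed by `ℤ`, with differential of degree `+1`. -/
structure Cplx (R : Type u) [CommRing R] where
  /-- the degree `n` part -/
  X : ℤ → Type v
  [grp : ∀ n, AddCommGroup (X n)]
  [mod : ∀ n, Module R (X n)]
  /-- the differential -/
  d : ∀ n, X n →ₗ[R] X (n + 1)
  dd : ∀ n x, d (n + 1) (d n x) = 0

attribute [instance] Cplx.grp Cplx.mod

variable {R : Type u} [CommRing R]

/-- Transport along an equality of degrees. -/
def Cplx.cE (A : Cplx R) : ∀ {i j : ℤ}, i = j → (A.X i →ₗ[R] A.X j)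
  | _, _, rfl => LinearMap.id

/-- Morphisms of complexes, i.e. `R`-linear chain maps. -/
structure Hom (A B : Cplx R) where
  /-- the components -/
  f : ∀ n, A.X n →ₗ[R] B.X n
  comm : ∀ n x, f (n + 1) (A.d n x) = B.d n (f n x)

/-!
`ι ∘ π′` is the identity plus the null-homotopic map `d K + K d` of `s(-g)`, where
`K (b, c) = (σ c, 0)`: by its defining formula, `f (π′ (b, c))` is the `B`-component of
`(b, c) + (d K + K d) (b, c)`. A map of the form `id + d K + K d` commutes with `d`, and `f` is
injective, so `π′` commutes with `d` and is linear. Finally `π′ ∘ ι = id` because `g ∘ f = 0`.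
-/

section InjectiveComp

variable {M N P : Type*} [AddCommGroup M] [AddCommGroup N] [AddCommGroup P]
  [Module R M] [Module R N] [Module R P] {f : N →ₗ[R] P} {p : M → N}

lemma map_add_of_injective_comp (hf : Function.Injective f) (L : M →ₗ[R] P)
    (h : ∀ x, f (p x) = L x) (x y : M) : p (x + y) = p x + p y :=
  hf (by simp [h])

lemma map_smul_of_injective_comp (hf : Function.Injective f) (L : M →ₗ[R] P)
    (h : ∀ x, f (p x) = L x) (r : R) (x : M) : p (r • x) = r • p x :=
  hf (by simp [h])

end InjectiveComp

namespace Cplx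

@[simp] lemma map_cE {X Y : Cplx R} (φ : ∀ n, X.X n →ₗ[R] Y.X n) {i j : ℤ} (h : i = j)
    (x : X.X i) : φ j (X.cE h x) = Y.cE h (φ i x) := by
  cases h; rfl

variable (X : Cplx R)

@[simp] lemma cE_rfl {i : ℤ} (h : i = i) (x : X.X i) : X.cE h x = x := rfl

@[simp] lemma cE_cE {i j k : ℤ} (h₁ : i = j) (h₂ : j = k) (x : X.X i) :
    X.cE h₂ (X.cE h₁ x) = X.cE (h₁.trans h₂) x := by
  cases h₁; cases h₂; rfl

@[simp] lemma d_cE {i j : ℤ} (h : i = j) (x : X.X i) :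
    X.d j (X.cE h x) = X.cE (by rw [h]) (X.d i x) := by
  cases h; rfl

def nullHomotopic (K : ∀ n, X.X n →ₗ[R] X.X (n - 1)) (n : ℤ) : X.X n →ₗ[R] X.X n :=
  X.cE (Int.sub_add_cancel n 1) ∘ₗ X.d (n - 1) ∘ₗ K n +
    X.cE (Int.add_sub_cancel n 1) ∘ₗ K (n + 1) ∘ₗ X.d n

@[simp] lemma nullHomotopic_apply (K : ∀ n, X.X n →ₗ[R] X.X (n - 1)) (n : ℤ) (x : X.X n) :
    X.nullHomotopic K n x =
      X.cE (Int.sub_add_cancel n 1) (X.d (n - 1) (K n x)) +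
        X.cE (Int.add_sub_cancel n 1) (K (n + 1) (X.d n x)) :=
  rfl

lemma nullHomotopic_d (K : ∀ n, X.X n →ₗ[R] X.X (n - 1)) (n : ℤ) (x : X.X n) :
    X.nullHomotopic K (n + 1) (X.d n x) = X.d n (X.nullHomotopic K n x) := by
  simp [X.dd]

end Cplx

namespace Hom

variable {B C : Cplx R} (g : Hom B C)

/-- The simple complex `s(-g)`. -/
def simpleNeg : Cplx R where
  X n := B.X n × C.X (n - 1)
  d n := (B.d n ∘ₗ LinearMap.fst R _ _).prod
    (C.cE (Int.add_sub_cancel n 1).symm ∘ₗ (-(g.f n ∘ₗ LinearMap.fst R _ _) -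
      C.cE (Int.sub_add_cancel n 1) ∘ₗ C.d (n - 1) ∘ₗ LinearMap.snd R _ _))
  dd n x := by
    obtain ⟨b, c⟩ := x
    ext <;> simp [g.comm, B.dd, C.dd]

@[simp] lemma simpleNeg_add_fst (n : ℤ) (x y : g.simpleNeg.X n) : (x + y).1 = x.1 + y.1 := rfl

@[simp] lemma simpleNeg_d_fst (n : ℤ) (x : g.simpleNeg.X n) :
    (g.simpleNeg.d n x).1 = B.d n x.1 :=
  rfl

@[simp] lemma simpleNeg_d_snd (n : ℤ) (x : g.simpleNeg.X n) :
    (g.simpleNeg.d n x).2 = C.cE (Int.add_sub_cancel n 1).symm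
      (-(g.f n x.1) - C.cE (Int.sub_add_cancel n 1) (C.d (n - 1) x.2)) :=
  rfl

@[simp] lemma simpleNeg_cE_fst {i j : ℤ} (h : i = j) (x : g.simpleNeg.X i) :
    (g.simpleNeg.cE h x).1 = B.cE h x.1 := by
  cases h; rfl

lemma simpleNeg_nullHomotopic_fst (K : ∀ n, g.simpleNeg.X n →ₗ[R] g.simpleNeg.X (n - 1))
    (n : ℤ) (x : g.simpleNeg.X n) :
    (g.simpleNeg.nullHomotopic K n x).1 =
      B.cE (Int.sub_add_cancel n 1) (B.d (n - 1) (K n x).1) +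
        B.cE (Int.add_sub_cancel n 1) (K (n + 1) (g.simpleNeg.d n x)).1 := by
  simp

variable (σ : ∀ n, C.X n →ₗ[R] B.X n)

def simpleNegHomotopy (n : ℤ) : g.simpleNeg.X n →ₗ[R] g.simpleNeg.X (n - 1) :=
  (σ (n - 1) ∘ₗ LinearMap.snd R _ _).prod 0

@[simp] lemma simpleNegHomotopy_fst (n : ℤ) (x : g.simpleNeg.X n) :
    (g.simpleNegHomotopy σ n x).1 = σ (n - 1) x.2 := rfl

def simpleNegProj (n : ℤ) : g.simpleNeg.X n →ₗ[R] B.X n :=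
  LinearMap.fst R _ _ ∘ₗ (LinearMap.id + g.simpleNeg.nullHomotopic (g.simpleNegHomotopy σ) n)

lemma simpleNegProj_apply_eq_add_nullHomotopic (n : ℤ) (x : g.simpleNeg.X n) :
    g.simpleNegProj σ n x = x.1 + (g.simpleNeg.nullHomotopic (g.simpleNegHomotopy σ) n x).1 :=
  rfl

lemma simpleNegProj_apply (n : ℤ) (x : g.simpleNeg.X n) :
    g.simpleNegProj σ n x =
      x.1 - σ n (g.f n x.1) - B.cE (Int.sub_add_cancel n 1) (σ (n - 1 + 1) (C.d (n - 1) x.2)) +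
        B.cE (Int.sub_add_cancel n 1) (B.d (n - 1) (σ (n - 1) x.2)) := by
  simp [simpleNegProj_apply_eq_add_nullHomotopic]
  abel

lemma simpleNegProj_d (n : ℤ) (x : g.simpleNeg.X n) :
    g.simpleNegProj σ (n + 1) (g.simpleNeg.d n x) = B.d n (g.simpleNegProj σ n x) := by
  simp only [simpleNegProj_apply_eq_add_nullHomotopic, Cplx.nullHomotopic_d, simpleNeg_d_fst,
    map_add]

lemma simpleNegProj_eq_fst (n : ℤ) {x : g.simpleNeg.X n} (hg : g.f n x.1 = 0) (h0 : x.2 = 0) :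
    g.simpleNegProj σ n x = x.1 := by
  simp [simpleNegProj_apply, hg, h0]

lemma simpleNegProj_sub_fst (n : ℤ) (x : g.simpleNeg.X n) :
    g.simpleNegProj σ n x - x.1 =
      B.cE (Int.sub_add_cancel n 1) (B.d (n - 1) (σ (n - 1) x.2)) +
        B.cE (Int.add_sub_cancel n 1) (σ (n + 1 - 1) (g.simpleNeg.d n x).2) := by
  rw [simpleNegProj_apply_eq_add_nullHomotopic, add_sub_cancel_left, simpleNeg_nullHomotopic_fst]
  rfl

end Hom

/-- Let `0 → A → B → C → 0` be a degreewise split short exact sequence of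
complexes, with sections `σ` of `g`.  Consider the simple complex `s(-g)` with
`s(-g)^n = B^n ⊕ C^{n-1}` and `d(b,c) = (d b, -g(b) - d c)`, and `ι : A → s(-g)`,
`ι(a) = (f(a),0)`.  Let `pσ n (b,c)` be the element of `A^n` with
`f(pσ n (b,c)) = b - σ(g b) - σ(d c) + d(σ c)`.  Then `π′ = pσ` is a morphism of complexes,
`π′ ∘ ι = Id_A` and `ι ∘ π′` is chain homotopic to the identity of `s(-g)`. -/
theorem statement2 {A B C : Cplx R} (f : Hom A B) (g : Hom B C)
    (hinj : ∀ n, Function.Injective (f.f n))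
    (hexact : ∀ n, LinearMap.range (f.f n) = LinearMap.ker (g.f n))
    (σ : ∀ n, C.X n →ₗ[R] B.X n)
    (hσ : ∀ n c, g.f n (σ n c) = c)
    (pσ : ∀ n, (B.X n × C.X (n - 1)) → A.X n)
    (hpσ : ∀ n (b : B.X n) (c : C.X (n - 1)),
      f.f n (pσ n (b, c)) =
        b - σ n (g.f n b) -
          B.cE (show n - 1 + 1 = n by omega) (σ (n - 1 + 1) (C.d (n - 1) c)) +
          B.cE (show n - 1 + 1 = n by omega) (B.d (n - 1) (σ (n - 1) c))) :
    -- `π′` is a morphism of complexes: R-linearity ...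
    (∀ n (x y : B.X n × C.X (n - 1)), pσ n (x + y) = pσ n x + pσ n y) ∧
    (∀ n (r : R) (x : B.X n × C.X (n - 1)), pσ n (r • x) = r • pσ n x) ∧
    -- ... and compatibility with the differentials
    (∀ n (b : B.X n) (c : C.X (n - 1)),
      pσ (n + 1) (B.d n b,
        C.cE (show n = n + 1 - 1 by omega)
          (-(g.f n b) - C.cE (show n - 1 + 1 = n by omega) (C.d (n - 1) c))) =
      A.d n (pσ n (b, c))) ∧
    -- `π′ ∘ ι = Id_A`
    (∀ n (a : A.X n), pσ n (f.f n a, 0) = a) ∧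
    -- `ι ∘ π′` is homotopic to the identity of `s(-g)`
    (∃ (K₁ : ∀ n, (B.X n × C.X (n - 1)) →ₗ[R] B.X (n - 1))
       (K₂ : ∀ n, (B.X n × C.X (n - 1)) →ₗ[R] C.X (n - 1 - 1)),
      ∀ n (b : B.X n) (c : C.X (n - 1)),
        (f.f n (pσ n (b, c)) - b =
          B.cE (show n - 1 + 1 = n by omega) (B.d (n - 1) (K₁ n (b, c))) +
            B.cE (show n + 1 - 1 = n by omega)
              (K₁ (n + 1) (B.d n b,
                C.cE (show n = n + 1 - 1 by omega)
                  (-(g.f n b) - C.cE (show n - 1 + 1 = n by omega) (C.d (n - 1) c))))) ∧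
        (0 - c =
          -(g.f (n - 1) (K₁ n (b, c))) -
            C.cE (show n - 1 - 1 + 1 = n - 1 by omega) (C.d (n - 1 - 1) (K₂ n (b, c))) +
            C.cE (show n + 1 - 1 - 1 = n - 1 by omega)
              (K₂ (n + 1) (B.d n b,
                C.cE (show n = n + 1 - 1 by omega)
                  (-(g.f n b) - C.cE (show n - 1 + 1 = n by omega) (C.d (n - 1) c)))))) := by
  have hgf : ∀ n a, g.f n (f.f n a) = 0 := fun n a =>
    LinearMap.mem_ker.mp (hexact n ▸ LinearMap.mem_range_self (f.f n) a)
  have hπ : ∀ n (x : g.simpleNeg.X n), f.f n (pσ n x) = g.simpleNegProj σ n x := fun n x =>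
    (hpσ n x.1 x.2).trans (g.simpleNegProj_apply σ n x).symm
  refine ⟨fun n => map_add_of_injective_comp (hinj n) _ (hπ n),
    fun n => map_smul_of_injective_comp (hinj n) _ (hπ n),
    fun n b c => hinj (n + 1) ?_, fun n a => hinj n ?_,
    ⟨fun n => σ (n - 1) ∘ₗ LinearMap.snd R _ _, fun _ => 0, fun n b c =>
      ⟨(congrArg (· - b) (hπ n (b, c))).trans (g.simpleNegProj_sub_fst σ n (b, c)),
        by simp [hσ]⟩⟩⟩
  · calc f.f (n + 1) (pσ (n + 1) (g.simpleNeg.d n (b, c)))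
        = g.simpleNegProj σ (n + 1) (g.simpleNeg.d n (b, c)) := hπ _ _
      _ = B.d n (g.simpleNegProj σ n (b, c)) := g.simpleNegProj_d σ n _
      _ = f.f (n + 1) (A.d n (pσ n (b, c))) := by rw [← hπ n (b, c), f.comm]
  · exact (hπ n (f.f n a, 0)).trans (g.simpleNegProj_eq_fst σ n (hgf n a) rfl)
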